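/- arXiv:0909.1440 — 2 statements merged into one kernel-verified Lean document; each statement's English description precedes it below -/
import Mathlib

section
/- For any vector y ∈ ℝ^p and any α ∈ (0,2), setting β = α/(2−α), the ℓ_α quasi-norm satisfies ‖y‖_α = min over z ∈ ℝ_+^p of (1/2)∑_{j=1}^p y_j²/z_j + (1/2)‖z‖_β, where terms y_j²/z_j are interpreted as 0 if y_j = 0 and z_j = 0, and as +∞ if y_j ≠ 0 and z_j = 0. -/
open scoped BigOperators ENNReal

/-- The ℓ_α quasi-norm of a vector `y ∈ ℝ^p`: `(∑ j |y j|^α)^(1/α)`. -/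
noncomputable def lpQuasiNorm {p : ℕ} (α : ℝ) (y : Fin p → ℝ) : ℝ :=
  (∑ j, |y j| ^ α) ^ (1 / α)

/-- The variational objective `(1/2)∑ y_j²/z_j + (1/2)‖z‖_β`, valued in `ℝ≥0∞`
so that `a/0 = ∞` for `a ≠ 0` and `0/0 = 0`. -/
noncomputable def varObj {p : ℕ} (β : ℝ) (y z : Fin p → ℝ) : ℝ≥0∞ :=
  (1 / 2) * ∑ j, ENNReal.ofReal (y j ^ 2) / ENNReal.ofReal (z j)
    + (1 / 2) * ENNReal.ofReal (lpQuasiNorm β z)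

/-!
Hölder's inequality with exponents `2/α` and `2/(2-α)`, applied to
`|y_j|^α = (y_j²/z_j)^{α/2} · z_j^{α/2}`, gives `‖y‖_α² ≤ (∑ y_j²/z_j) · ‖z‖_β`, and AM–GM turns
this into `‖y‖_α ≤ (1/2)∑ y_j²/z_j + (1/2)‖z‖_β`. Equality holds for
`z_j = ‖y‖_α^{α-1} |y_j|^{2-α}`, for which both terms equal `‖y‖_α / 2`.
-/

open Finset Real

lemma le_add_halves_of_sq_le_mul {x a b : ℝ} (ha : 0 ≤ a) (hb : 0 ≤ b) (h : x ^ 2 ≤ a * b) :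
    x ≤ a / 2 + b / 2 := by
  nlinarith [sq_nonneg (a - b)]

lemma sq_div_abs_rpow_two_sub {α : ℝ} (hα : α ≠ 0) (y : ℝ) :
    y ^ 2 / |y| ^ (2 - α) = |y| ^ α := by
  rcases eq_or_ne y 0 with rfl | hy
  · simp [zero_rpow hα]
  · rw [← sq_abs, ← rpow_natCast, ← rpow_sub (abs_pos.2 hy)]
    norm_num

lemma sq_rpow_half (α y : ℝ) : (y ^ 2) ^ (α / 2) = |y| ^ α := by
  rw [← sq_abs, ← rpow_natCast, ← rpow_mul (abs_nonneg y)]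
  congr 1
  ring

lemma ENNReal.ofReal_div_of_imp {x y : ℝ} (hy : 0 ≤ y) (h : y = 0 → x = 0) :
    ENNReal.ofReal (x / y) = ENNReal.ofReal x / ENNReal.ofReal y := by
  rcases hy.eq_or_lt with rfl | hy
  · simp [h rfl]
  · exact ENNReal.ofReal_div_of_pos hy

section

variable {p : ℕ}

lemma lpQuasiNorm_nonneg (α : ℝ) (y : Fin p → ℝ) : 0 ≤ lpQuasiNorm α y := by
  unfold lpQuasiNorm
  positivity

lemma lpQuasiNorm_rpow {α : ℝ} (hα : α ≠ 0) (y : Fin p → ℝ) :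
    lpQuasiNorm α y ^ α = ∑ j, |y j| ^ α := by
  rw [lpQuasiNorm, one_div, rpow_inv_rpow (by positivity) hα]

lemma lpQuasiNorm_eq_zero_iff {α : ℝ} (hα : α ≠ 0) {y : Fin p → ℝ} :
    lpQuasiNorm α y = 0 ↔ y = 0 := by
  rw [← rpow_eq_zero (lpQuasiNorm_nonneg α y) hα, lpQuasiNorm_rpow hα,
    sum_eq_zero_iff_of_nonneg fun j _ => by positivity, funext_iff]
  simp [rpow_eq_zero (abs_nonneg _) hα]

lemma lpQuasiNorm_const_mul {β c : ℝ} (hβ : β ≠ 0) (hc : 0 ≤ c) (z : Fin p → ℝ) :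
    lpQuasiNorm β (fun j => c * z j) = c * lpQuasiNorm β z := by
  simp only [lpQuasiNorm, abs_mul, abs_of_nonneg hc, mul_rpow hc (abs_nonneg _), ← mul_sum]
  rw [mul_rpow (by positivity) (by positivity), ← rpow_mul hc, mul_one_div_cancel hβ, rpow_one]

lemma lpQuasiNorm_abs_rpow {β γ : ℝ} (hγ : γ ≠ 0) (y : Fin p → ℝ) :
    lpQuasiNorm β (fun j => |y j| ^ γ) = lpQuasiNorm (γ * β) y ^ γ := by
  simp only [lpQuasiNorm, abs_of_nonneg (rpow_nonneg (abs_nonneg _) _),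
    ← rpow_mul (abs_nonneg _)]
  rw [← rpow_mul (by positivity)]
  congr 1
  field_simp

lemma sum_abs_rpow_le_holder {α : ℝ} (hα0 : 0 < α) (hα2 : α < 2) {y z : Fin p → ℝ}
    (hz : ∀ j, 0 ≤ z j) (hyz : ∀ j, z j = 0 → y j = 0) :
    ∑ j, |y j| ^ α ≤
      (∑ j, y j ^ 2 / z j) ^ (α / 2) * (∑ j, z j ^ (α / (2 - α))) ^ ((2 - α) / 2) := by
  have hpq : HolderConjugate (2 / α) (2 / (2 - α)) := by
    rw [holderConjugate_iff]
    refine ⟨by rw [lt_div_iff₀ hα0]; linarith, ?_⟩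
    field_simp
    ring
  have hf (j : Fin p) : 0 ≤ y j ^ 2 / z j := div_nonneg (sq_nonneg _) (hz j)
  have hprod (j : Fin p) : (y j ^ 2 / z j) ^ (α / 2) * z j ^ (α / 2) = |y j| ^ α := by
    rw [← mul_rpow (hf j) (hz j), div_mul_cancel_of_imp fun h => by simp [hyz j h],
      sq_rpow_half]
  have hfp (j : Fin p) : ((y j ^ 2 / z j) ^ (α / 2)) ^ (2 / α) = y j ^ 2 / z j := by
    rw [← rpow_mul (hf j), div_mul_div_cancel₀ two_ne_zero, div_self hα0.ne', rpow_one]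
  have hgq (j : Fin p) : (z j ^ (α / 2)) ^ (2 / (2 - α)) = z j ^ (α / (2 - α)) := by
    rw [← rpow_mul (hz j)]
    congr 1
    field_simp
  calc ∑ j, |y j| ^ α = ∑ j, (y j ^ 2 / z j) ^ (α / 2) * z j ^ (α / 2) := by simp only [hprod]
    _ ≤ _ := inner_le_Lp_mul_Lq_of_nonneg univ hpq (fun j _ => rpow_nonneg (hf j) _)
          (fun j _ => rpow_nonneg (hz j) _)
    _ = _ := by simp only [hfp, hgq, one_div_div]

lemma lpQuasiNorm_sq_le_mul {α β : ℝ} (hα0 : 0 < α) (hα2 : α < 2) (hβ : β = α / (2 - α))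
    {y z : Fin p → ℝ} (hz : ∀ j, 0 ≤ z j) (hyz : ∀ j, z j = 0 → y j = 0) :
    lpQuasiNorm α y ^ 2 ≤ (∑ j, y j ^ 2 / z j) * lpQuasiNorm β z := by
  have hA : 0 ≤ ∑ j, y j ^ 2 / z j := sum_nonneg fun j _ => div_nonneg (sq_nonneg _) (hz j)
  have hT : 0 ≤ ∑ j, z j ^ β := sum_nonneg fun j _ => rpow_nonneg (hz j) _
  have hnorm : lpQuasiNorm β z = (∑ j, z j ^ β) ^ (1 / β) := by
    simp only [lpQuasiNorm, abs_of_nonneg (hz _)]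
  have hholder := sum_abs_rpow_le_holder hα0 hα2 hz hyz
  rw [← hβ] at hholder
  calc lpQuasiNorm α y ^ 2 = (∑ j, |y j| ^ α) ^ (2 / α) := by
        rw [lpQuasiNorm, ← rpow_natCast, ← rpow_mul (by positivity)]
        norm_num [div_eq_inv_mul]
    _ ≤ ((∑ j, y j ^ 2 / z j) ^ (α / 2) * (∑ j, z j ^ β) ^ ((2 - α) / 2)) ^ (2 / α) :=
        rpow_le_rpow (by positivity) hholder (by positivity)
    _ = (∑ j, y j ^ 2 / z j) * lpQuasiNorm β z := by
        rw [mul_rpow (by positivity) (by positivity), ← rpow_mul hA, ← rpow_mul hT, hnorm,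
          div_mul_div_cancel₀ two_ne_zero, div_self hα0.ne', rpow_one, hβ]
        congr 2
        have : 2 - α ≠ 0 := by linarith
        field_simp

noncomputable def varObjReal (β : ℝ) (y z : Fin p → ℝ) : ℝ :=
  (1 / 2) * ∑ j, y j ^ 2 / z j + (1 / 2) * lpQuasiNorm β z

lemma lpQuasiNorm_le_varObjReal {α β : ℝ} (hα0 : 0 < α) (hα2 : α < 2) (hβ : β = α / (2 - α))
    {y z : Fin p → ℝ} (hz : ∀ j, 0 ≤ z j) (hyz : ∀ j, z j = 0 → y j = 0) :
    lpQuasiNorm α y ≤ varObjReal β y z := by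
  have h := le_add_halves_of_sq_le_mul (sum_nonneg fun j _ => div_nonneg (sq_nonneg _) (hz j))
    (lpQuasiNorm_nonneg β z) (lpQuasiNorm_sq_le_mul hα0 hα2 hβ hz hyz)
  rw [varObjReal]
  linarith

/-- The equality case of Hölder's inequality, `z_j^β ∝ |y_j|^α`, scaled so that the two terms of
the objective agree (the equality case of AM–GM). -/
noncomputable def optimalWeights (α : ℝ) (y : Fin p → ℝ) : Fin p → ℝ :=
  fun j => lpQuasiNorm α y ^ (α - 1) * |y j| ^ (2 - α)

lemma optimalWeights_nonneg (α : ℝ) (y : Fin p → ℝ) (j : Fin p) :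
    0 ≤ optimalWeights α y j := by
  unfold optimalWeights
  have := lpQuasiNorm_nonneg α y
  positivity

lemma eq_zero_of_optimalWeights_eq_zero {α : ℝ} (hα0 : α ≠ 0) (hα2 : α ≠ 2) {y : Fin p → ℝ}
    {j : Fin p} (h : optimalWeights α y j = 0) : y j = 0 := by
  rcases mul_eq_zero.1 h with h | h
  · have hN := ((rpow_eq_zero_iff_of_nonneg (lpQuasiNorm_nonneg α y)).1 h).1
    rw [(lpQuasiNorm_eq_zero_iff hα0).1 hN, Pi.zero_apply]
  · exact abs_eq_zero.1 ((rpow_eq_zero (abs_nonneg _) (sub_ne_zero.2 hα2.symm)).1 h)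

lemma varObjReal_optimalWeights {α β : ℝ} (hα0 : 0 < α) (hα2 : α < 2) (hβ : β = α / (2 - α))
    (y : Fin p → ℝ) : varObjReal β y (optimalWeights α y) = lpQuasiNorm α y := by
  set N := lpQuasiNorm α y
  have hN : 0 ≤ N := lpQuasiNorm_nonneg α y
  have hsum : ∑ j, y j ^ 2 / optimalWeights α y j = N := by
    simp only [optimalWeights, div_mul_eq_div_div_swap, sq_div_abs_rpow_two_sub hα0.ne']
    rw [← sum_div, ← lpQuasiNorm_rpow hα0.ne', div_eq_mul_inv, ← rpow_neg hN,
      ← rpow_add' hN (by norm_num), show α + -(α - 1) = 1 by ring, rpow_one]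
  have hnorm : lpQuasiNorm β (optimalWeights α y) = N := by
    have h2α : 2 - α ≠ 0 := by linarith
    have hβα : (2 - α) * β = α := by rw [hβ]; field_simp
    unfold optimalWeights
    rw [lpQuasiNorm_const_mul (by rw [hβ]; positivity) (rpow_nonneg hN _),
      lpQuasiNorm_abs_rpow h2α, hβα, ← rpow_add' hN (by norm_num),
      show α - 1 + (2 - α) = 1 by ring, rpow_one]
  rw [varObjReal, hsum, hnorm]
  ring

lemma varObj_eq_ofReal_varObjReal (β : ℝ) {y z : Fin p → ℝ} (hz : ∀ j, 0 ≤ z j)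
    (hyz : ∀ j, z j = 0 → y j = 0) : varObj β y z = ENNReal.ofReal (varObjReal β y z) := by
  have hA (j : Fin p) : 0 ≤ y j ^ 2 / z j := div_nonneg (sq_nonneg _) (hz j)
  have hsum : ∑ j, ENNReal.ofReal (y j ^ 2) / ENNReal.ofReal (z j)
      = ENNReal.ofReal (∑ j, y j ^ 2 / z j) := by
    rw [ENNReal.ofReal_sum_of_nonneg fun j _ => hA j]
    exact sum_congr rfl fun j _ =>
      (ENNReal.ofReal_div_of_imp (hz j) fun h => by simp [hyz j h]).symm
  have hhalf : ENNReal.ofReal (1 / 2) = 1 / 2 := by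
    rw [one_div, ENNReal.ofReal_inv_of_pos two_pos, ENNReal.ofReal_ofNat, one_div]
  rw [varObj, hsum, varObjReal,
    ENNReal.ofReal_add (mul_nonneg (by norm_num) (sum_nonneg fun j _ => hA j))
      (mul_nonneg (by norm_num) (lpQuasiNorm_nonneg β z)),
    ENNReal.ofReal_mul (by norm_num), ENNReal.ofReal_mul (by norm_num), hhalf]

lemma varObj_eq_top (β : ℝ) {y z : Fin p → ℝ} {j : Fin p} (hzj : z j = 0) (hyj : y j ≠ 0) :
    varObj β y z = ⊤ := by
  have hterm : ENNReal.ofReal (y j ^ 2) / ENNReal.ofReal (z j) = ⊤ := by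
    rw [hzj, ENNReal.ofReal_zero]
    exact ENNReal.div_zero (by positivity)
  rw [varObj, ENNReal.sum_eq_top.2 ⟨j, mem_univ j, hterm⟩, ENNReal.mul_top (by norm_num),
    top_add]

end

/-- For `α ∈ (0,2)` and `β = α/(2-α)`, the quasi-norm `‖y‖_α` is the minimum over
`z ∈ ℝ_+^p` of `(1/2)∑ y_j²/z_j + (1/2)‖z‖_β`. -/
theorem sparse_pca_variational_formula {p : ℕ} (α β : ℝ)
    (hα : α ∈ Set.Ioo (0 : ℝ) 2) (hβ : β = α / (2 - α)) (y : Fin p → ℝ) :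
    IsLeast {v : ℝ≥0∞ | ∃ z : Fin p → ℝ, (∀ j, 0 ≤ z j) ∧ v = varObj β y z}
      (ENNReal.ofReal (lpQuasiNorm α y)) := by
  obtain ⟨hα0, hα2⟩ := hα
  refine ⟨⟨optimalWeights α y, optimalWeights_nonneg α y, ?_⟩, ?_⟩
  · rw [varObj_eq_ofReal_varObjReal β (optimalWeights_nonneg α y)
      fun j => eq_zero_of_optimalWeights_eq_zero hα0.ne' hα2.ne,
      varObjReal_optimalWeights hα0 hα2 hβ]
  · rintro _ ⟨z, hz, rfl⟩
    by_cases hyz : ∀ j, z j = 0 → y j = 0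
    · rw [varObj_eq_ofReal_varObjReal β hz hyz]
      exact ENNReal.ofReal_le_ofReal (lpQuasiNorm_le_varObjReal hα0 hα2 hβ hz hyz)
    · push Not at hyz
      obtain ⟨j, hzj, hyj⟩ := hyz
      rw [varObj_eq_top β hzj hyj]
      exact le_top
end

section
/- Fix k and positive diagonal vector ζ^k ∈ ℝ^p, U ∈ ℝ^{n×r} with U^k ≠ 0, X ∈ ℝ^{n×p}, λ > 0, and columns V^j, j ≠ k, of V. The minimizer over V^k ∈ ℝ^p of (1/(2np))‖X − UV^⊤‖_F² + (λ/2)(V^k)^⊤ Diag(ζ^k)^{−1} V^k is given in closed form by V^k = Diag(ζ^k) Diag(‖U^k‖₂² ζ^k + npλ 𝟏)^{−1} (X^⊤U^k − Ṽ U^⊤U^k + ‖U^k‖₂² Ṽ^k), where Ṽ denotes the current V (with its k-th column Ṽ^k). -/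
open scoped BigOperators

/-- Closed-form BCD update of the column `V^k`: with positive diagonal vector `ζ^k`,
`U^k ≠ 0`, and `λ > 0`, the unique minimizer over `V^k` of
`(1/(2np))‖X − UVᵀ‖_F² + (λ/2)(V^k)ᵀ Diag(ζ^k)⁻¹ V^k` is
`Diag(ζ^k) Diag(‖U^k‖₂² ζ^k + npλ 𝟏)⁻¹ (Xᵀ U^k − V Uᵀ U^k + ‖U^k‖₂² V^k)`,
where `V` denotes the current dictionary. -/
theorem V_update_closed_form {n p r : ℕ} (hn : 0 < n) (hp : 0 < p)
    (X : Fin n → Fin p → ℝ) (U : Fin r → Fin n → ℝ) (V : Fin r → Fin p → ℝ)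
    (k : Fin r) (hU : U k ≠ 0) (lam : ℝ) (hlam : 0 < lam)
    (ζ : Fin p → ℝ) (hζ : ∀ j, 0 < ζ j)
    (obj : (Fin p → ℝ) → ℝ)
    (hobj : obj = fun v =>
      (1 / (2 * (n : ℝ) * (p : ℝ))) *
        ∑ i, ∑ j, (X i j - ((∑ l ∈ Finset.univ.erase k, U l i * V l j)
          + U k i * v j)) ^ 2
      + (lam / 2) * ∑ j, v j ^ 2 / ζ j)
    (vstar : Fin p → ℝ)
    (hvstar : vstar = fun j =>
      ζ j * ((∑ i, X i j * U k i) - (∑ l, V l j * ∑ i, U l i * U k i)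
          + (∑ i, U k i ^ 2) * V k j)
        / ((∑ i, U k i ^ 2) * ζ j + (n : ℝ) * (p : ℝ) * lam)) :
    (∀ v : Fin p → ℝ, obj vstar ≤ obj v) ∧
    (∀ v : Fin p → ℝ, obj v = obj vstar → v = vstar) := by
  have hnp : (0:ℝ) < 2 * (n:ℝ) * (p:ℝ) := by positivity
  set S : ℝ := ∑ i, U k i ^ 2 with hS
  have hS0 : 0 ≤ S := Finset.sum_nonneg fun i _ => sq_nonneg _
  set R : Fin n → Fin p → ℝ :=
    fun i j => X i j - ∑ l ∈ Finset.univ.erase k, U l i * V l j with hR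
  set B : Fin p → ℝ := fun j => ∑ i, R i j * U k i with hB
  set a : Fin p → ℝ := fun j => S / (2 * (n:ℝ) * (p:ℝ)) + lam / (2 * ζ j) with ha
  have hapos : ∀ j, 0 < a j := by
    intro j
    have h1 : 0 ≤ S / (2 * (n:ℝ) * (p:ℝ)) := div_nonneg hS0 hnp.le
    have h2 : 0 < lam / (2 * ζ j) := div_pos hlam (by have := hζ j; linarith)
    simp only [ha]; linarith
  have hden : ∀ j, 0 < S * ζ j + (n:ℝ) * (p:ℝ) * lam := by
    intro j
    have h1 : 0 ≤ S * ζ j := mul_nonneg hS0 (hζ j).le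
    have h2 : 0 < (n:ℝ) * (p:ℝ) * lam := by positivity
    linarith
  -- vstar in terms of B
  have hNum : ∀ j, (∑ i, X i j * U k i) - (∑ l, V l j * ∑ i, U l i * U k i)
      + S * V k j = B j := by
    intro j
    have h1 : ∑ l, V l j * ∑ i, U l i * U k i
        = (∑ l ∈ Finset.univ.erase k, V l j * ∑ i, U l i * U k i)
          + V k j * ∑ i, U k i * U k i :=
      (Finset.sum_erase_add _ _ (Finset.mem_univ k)).symm
    have h2 : ∑ i, U k i * U k i = S := by simp [hS, sq]
    have h3 : ∑ i, (∑ l ∈ Finset.univ.erase k, U l i * V l j) * U k i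
        = ∑ l ∈ Finset.univ.erase k, V l j * ∑ i, U l i * U k i := by
      calc ∑ i, (∑ l ∈ Finset.univ.erase k, U l i * V l j) * U k i
          = ∑ i, ∑ l ∈ Finset.univ.erase k, U l i * V l j * U k i := by
            exact Finset.sum_congr rfl fun i _ => Finset.sum_mul ..
        _ = ∑ l ∈ Finset.univ.erase k, ∑ i, U l i * V l j * U k i := Finset.sum_comm
        _ = ∑ l ∈ Finset.univ.erase k, V l j * ∑ i, U l i * U k i := by
            refine Finset.sum_congr rfl fun l _ => ?_
            rw [Finset.mul_sum]
            exact Finset.sum_congr rfl fun i _ => by ring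
    simp only [hB, hR, sub_mul, Finset.sum_sub_distrib, h3, h1, h2]
    ring
  have hvB : ∀ j, vstar j = ζ j * B j / (S * ζ j + (n:ℝ) * (p:ℝ) * lam) := by
    intro j
    rw [hvstar]
    simp only
    rw [hNum j]
  -- decompose obj into per-coordinate functions
  set f : Fin p → ℝ → ℝ := fun j t =>
    (1 / (2 * (n:ℝ) * (p:ℝ))) * ∑ i, (R i j - U k i * t) ^ 2
      + (lam / 2) * (t ^ 2 / ζ j) with hf
  have hobjf : ∀ v, obj v = ∑ j, f j (v j) := by
    intro v
    rw [hobj]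
    simp only [hf]
    rw [Finset.sum_add_distrib, ← Finset.mul_sum, ← Finset.mul_sum, Finset.sum_comm]
    congr 2
    apply Finset.sum_congr rfl; intro j _
    apply Finset.sum_congr rfl; intro i _
    simp only [hR]; ring
  -- inner expansion
  have hexp : ∀ j t, ∑ i, (R i j - U k i * t) ^ 2
      = (∑ i, R i j ^ 2) - 2 * t * B j + t ^ 2 * S := by
    intro j t
    have : ∀ i : Fin n, (R i j - U k i * t) ^ 2
        = R i j ^ 2 - 2 * t * (R i j * U k i) + t ^ 2 * U k i ^ 2 := by
      intro i; ring
    rw [Finset.sum_congr rfl fun i _ => this i]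
    rw [Finset.sum_add_distrib, Finset.sum_sub_distrib, ← Finset.mul_sum,
      ← Finset.mul_sum]
  -- per-coordinate key identity
  have hkey : ∀ j t, f j t = f j (vstar j) + a j * (t - vstar j) ^ 2 := by
    intro j t
    have hz := hζ j
    have hd := hden j
    simp only [hf, hexp, hvB j, ha]
    have hnp' : (2 * (n:ℝ) * (p:ℝ)) ≠ 0 := ne_of_gt hnp
    have hz' : ζ j ≠ 0 := ne_of_gt hz
    have hd' : S * ζ j + (n:ℝ) * (p:ℝ) * lam ≠ 0 := ne_of_gt hd
    field_simp
    try ring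
  have hmain : ∀ v, obj v = obj vstar + ∑ j, a j * (v j - vstar j) ^ 2 := by
    intro v
    rw [hobjf v, hobjf vstar, ← Finset.sum_add_distrib]
    exact Finset.sum_congr rfl fun j _ => hkey j (v j)
  constructor
  · intro v
    rw [hmain v]
    have : 0 ≤ ∑ j, a j * (v j - vstar j) ^ 2 :=
      Finset.sum_nonneg fun j _ => mul_nonneg (hapos j).le (sq_nonneg _)
    linarith
  · intro v hv
    rw [hmain v] at hv
    have hsum : ∑ j, a j * (v j - vstar j) ^ 2 = 0 := by linarith
    have hterm := (Finset.sum_eq_zero_iff_of_nonneg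
      (fun j _ => mul_nonneg (hapos j).le (sq_nonneg (v j - vstar j)))).mp hsum
    funext j
    have h := hterm j (Finset.mem_univ j)
    have h2 : (v j - vstar j) ^ 2 = 0 := by
      rcases mul_eq_zero.mp h with h' | h'
      · exact absurd h' (ne_of_gt (hapos j))
      · exact h'
    have := pow_eq_zero_iff (n := 2) (by norm_num) |>.mp h2
    linarith
end
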